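/- Let N > 1 and α ≥ 1 be natural numbers, let m₁, m₂ < N be natural numbers, let y₁, y₂ : ZMod (N^2) satisfy y₁^(2αN) = 1 and y₂^(2αN) = 1, and let c₁ := (1+N)^(m₁) · y₁^N and c₂ := (1+N)^(m₂) · y₂^N in ZMod (N^2). Then (c₁ · c₂)^(2α) = (1+N)^(2α·(m₁+m₂)) in ZMod (N^2); in particular c₁ · c₂ is a FastPaiTD ciphertext whose decryption is (m₁ + m₂) mod N. -/
import Mathlib

lemma fastPai_one_add_pow (N k : ℕ) :
    ((1 : ZMod (N^2)) + (N : ZMod (N^2)))^k = 1 + (k : ZMod (N^2)) * N := by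
  induction k with
  | zero => simp
  | succ k ih =>
      have hx : (N : ZMod (N^2))^2 = 0 := by
        have : ((N^2 : ℕ) : ZMod (N^2)) = 0 := ZMod.natCast_self _
        push_cast at this
        exact this
      rw [pow_succ (1 + (N : ZMod (N^2))) k, ih]
      push_cast
      ring_nf
      rw [hx]
      ring

lemma fastPai_one_add_pow_N (N : ℕ) :
    ((1 : ZMod (N^2)) + (N : ZMod (N^2)))^N = 1 := by
  rw [fastPai_one_add_pow]
  have hx : (N : ZMod (N^2))^2 = 0 := by
    have : ((N^2 : ℕ) : ZMod (N^2)) = 0 := ZMod.natCast_self _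
    push_cast at this
    exact this
  rw [← pow_two (N : ZMod (N^2)), hx, add_zero]

/-- Additive homomorphism of FastPaiTD: for ciphertexts
`c₁ = (1+N)^(m₁)·y₁^N` and `c₂ = (1+N)^(m₂)·y₂^N`, one has
`(c₁·c₂)^(2α) = (1+N)^(2α(m₁+m₂))`; in particular `c₁·c₂` is a FastPaiTD
ciphertext of `(m₁ + m₂) mod N`. -/
theorem fastPaiTD_add_hom (N α : ℕ) (hN : 1 < N) (hα : 1 ≤ α)
    (m₁ m₂ : ℕ) (hm₁ : m₁ < N) (hm₂ : m₂ < N)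
    (y₁ y₂ : ZMod (N^2)) (hy₁ : y₁^(2 * α * N) = 1) (hy₂ : y₂^(2 * α * N) = 1)
    (c₁ c₂ : ZMod (N^2))
    (hc₁ : c₁ = ((1 : ZMod (N^2)) + (N : ZMod (N^2)))^m₁ * y₁^N)
    (hc₂ : c₂ = ((1 : ZMod (N^2)) + (N : ZMod (N^2)))^m₂ * y₂^N) :
    (c₁ * c₂)^(2 * α)
      = ((1 : ZMod (N^2)) + (N : ZMod (N^2)))^(2 * α * (m₁ + m₂)) ∧
    ∃ y₃ : ZMod (N^2), y₃^(2 * α * N) = 1 ∧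
      c₁ * c₂ = ((1 : ZMod (N^2)) + (N : ZMod (N^2)))^((m₁ + m₂) % N) * y₃^N := by
  set g : ZMod (N^2) := (1 : ZMod (N^2)) + (N : ZMod (N^2)) with hg
  have hgN : g ^ N = 1 := fastPai_one_add_pow_N N
  have hcc : c₁ * c₂ = g ^ (m₁ + m₂) * (y₁ * y₂) ^ N := by
    rw [hc₁, hc₂, pow_add, mul_pow]; ring
  constructor
  · rw [hcc, mul_pow, ← pow_mul, ← pow_mul]
    have h1 : (m₁ + m₂) * (2 * α) = 2 * α * (m₁ + m₂) := by ring
    have h2 : N * (2 * α) = 2 * α * N := by ring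
    rw [h1, h2, mul_pow, hy₁, hy₂, one_mul, mul_one]
  · refine ⟨y₁ * y₂, by rw [mul_pow, hy₁, hy₂, one_mul], ?_⟩
    rw [hcc]
    congr 1
    conv_lhs => rw [← Nat.mod_add_div (m₁ + m₂) N, pow_add, pow_mul, hgN, one_pow, mul_one]
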